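/- Let ⋆ be a continuous and sup-continuous triangle function and (G,·,D,⋆) a probabilistic invariant metric group. Then the group of invertible elements of the monoid (Lip¹_⋆(G,Δ⁺), ⊙) equals {x ↦ f(x) ⋆ U : f ∈ Π(G), U invertible in (Δ⁺,⋆)}, and the inverse of ⟨f,U⟩ is ⟨f⁻¹, U⁻¹⟩. In particular, if H_0 is the only invertible element of (Δ⁺,⋆), then the group of units of (Lip¹_⋆(G,Δ⁺), ⊙) is exactly Π(G), and if moreover G is complete it is {δ_a : a ∈ G} ≅ G. -/

import Mathlib

open Filter Topology Set

/-- A (real-domain representation of a) distribution function in Δ⁺ :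
nondecreasing, with values in [0,1], left-continuous, vanishing on (-∞,0]. -/
def MemDP (f : ℝ → ℝ) : Prop :=
  Monotone f ∧ (∀ t, 0 ≤ f t) ∧ (∀ t, f t ≤ 1) ∧
  (∀ t : ℝ, Tendsto f (nhdsWithin t (Set.Iio t)) (nhds (f t))) ∧
  (∀ t ≤ (0:ℝ), f t = 0)

/-- The distribution H₀. -/
noncomputable def H0 : ℝ → ℝ := fun t => if 0 < t then 1 else 0

/-- The distribution H_∞ (zero at every finite point). -/
def Hinf : ℝ → ℝ := fun _ => 0

/-- Pointwise order on distribution functions. -/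
def dpLE (f g : ℝ → ℝ) : Prop := ∀ t, f t ≤ g t

/-- Triangle function on Δ⁺. -/
structure IsTriangle (star : (ℝ → ℝ) → (ℝ → ℝ) → (ℝ → ℝ)) : Prop where
  mem : ∀ f g, MemDP f → MemDP g → MemDP (star f g)
  comm : ∀ f g, MemDP f → MemDP g → star f g = star g f
  assoc : ∀ f g h, MemDP f → MemDP g → MemDP h →
    star f (star g h) = star (star f g) h
  ident : ∀ f, MemDP f → star f H0 = f
  mono : ∀ f g h, MemDP f → MemDP g → MemDP h → dpLE f g → dpLE (star f h) (star g h)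

/-- Sup-continuity of a triangle function (suprema in Δ⁺ are pointwise). -/
def SupCont (star : (ℝ → ℝ) → (ℝ → ℝ) → (ℝ → ℝ)) : Prop :=
  ∀ (I : Type) (_ : Nonempty I) (F : I → ℝ → ℝ) (L : ℝ → ℝ),
    (∀ i, MemDP (F i)) → MemDP L →
    ∀ t, (⨆ i, star (F i) L t) = star (fun s => ⨆ i, F i s) L t

/-- Weak convergence in Δ⁺: pointwise convergence at each continuity point of the limit. -/
def WConv (Fn : ℕ → ℝ → ℝ) (F : ℝ → ℝ) : Prop :=
  ∀ t, ContinuousAt F t → Tendsto (fun n => Fn n t) atTop (nhds (F t))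

/-- Continuity of a triangle function w.r.t. weak convergence. -/
def StarCont (star : (ℝ → ℝ) → (ℝ → ℝ) → (ℝ → ℝ)) : Prop :=
  ∀ (Fn Ln : ℕ → ℝ → ℝ) (F L : ℝ → ℝ),
    (∀ n, MemDP (Fn n)) → (∀ n, MemDP (Ln n)) → MemDP F → MemDP L →
    WConv Fn F → WConv Ln L → WConv (fun n => star (Fn n) (Ln n)) (star F L)

/-- Probabilistic metric space (G, D, ⋆). -/
structure IsPMS {G : Type} (D : G → G → ℝ → ℝ)
    (star : (ℝ → ℝ) → (ℝ → ℝ) → (ℝ → ℝ)) : Prop where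
  tri : IsTriangle star
  mem : ∀ p q, MemDP (D p q)
  eq_iff : ∀ p q, D p q = H0 ↔ p = q
  symm : ∀ p q, D p q = D q p
  triangle_ineq : ∀ p q r, dpLE (star (D p q) (D q r)) (D p r)

/-- Probabilistic invariant metric group. -/
structure IsPIMG {G : Type} [Group G] (D : G → G → ℝ → ℝ)
    (star : (ℝ → ℝ) → (ℝ → ℝ) → (ℝ → ℝ)) extends IsPMS D star : Prop where
  invL : ∀ p q r : G, D (r * p) (r * q) = D p q
  invR : ∀ p q r : G, D (p * r) (q * r) = D p q

/-- Probabilistic 1-Lipschitz map. -/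
def Lip1 {G : Type} (D : G → G → ℝ → ℝ) (star : (ℝ → ℝ) → (ℝ → ℝ) → (ℝ → ℝ))
    (f : G → ℝ → ℝ) : Prop :=
  (∀ x, MemDP (f x)) ∧ ∀ x y, dpLE (star (D x y) (f y)) (f x)

/-- δ_a(y) = D(y,a). -/
def dlt {G : Type} (D : G → G → ℝ → ℝ) (a : G) : G → ℝ → ℝ := fun y => D y a

/-- Sup-convolution (f ⊙ g)(x) = sup_{yz = x} f(y) ⋆ g(z), pointwise. -/
noncomputable def sconv {G : Type} [Group G] (star : (ℝ → ℝ) → (ℝ → ℝ) → (ℝ → ℝ))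
    (f g : G → ℝ → ℝ) : G → ℝ → ℝ :=
  fun x t => ⨆ y : G, star (f (x * y⁻¹)) (g y) t

/-- Cauchy sequence for a probabilistic metric: D(a_n, a_p) → H₀ weakly. -/
def PCauchy {G : Type} (D : G → G → ℝ → ℝ) (a : ℕ → G) : Prop :=
  ∀ t > (0:ℝ), ∀ ε > (0:ℝ), ∃ N, ∀ n ≥ N, ∀ p ≥ N, 1 - ε ≤ D (a n) (a p) t

/-- Π(G): probabilistic 1-Lipschitz maps that are pointwise weak limits of δ_{a_n}
for some Cauchy sequence (a_n). -/
def InPi {G : Type} (D : G → G → ℝ → ℝ) (star : (ℝ → ℝ) → (ℝ → ℝ) → (ℝ → ℝ))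
    (f : G → ℝ → ℝ) : Prop :=
  Lip1 D star f ∧ ∃ a : ℕ → G, PCauchy D a ∧ ∀ x, WConv (fun n => D (a n) x) (f x)

/-- 𝔻(f,g) = sup_{x∈G} f(x) ⋆ g(x), pointwise. -/
noncomputable def DD {G : Type} (star : (ℝ → ℝ) → (ℝ → ℝ) → (ℝ → ℝ))
    (f g : G → ℝ → ℝ) : ℝ → ℝ :=
  fun t => ⨆ x : G, star (f x) (g x) t

/-- t-norm on [0,1]. -/
structure IsTnorm (T : ℝ → ℝ → ℝ) : Prop where
  mem : ∀ x ∈ Set.Icc (0:ℝ) 1, ∀ y ∈ Set.Icc (0:ℝ) 1, T x y ∈ Set.Icc (0:ℝ) 1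
  comm : ∀ x y, T x y = T y x
  assoc : ∀ x y z, T x (T y z) = T (T x y) z
  mono : ∀ x y z, y ≤ z → T x y ≤ T x z
  one : ∀ x ∈ Set.Icc (0:ℝ) 1, T x 1 = x

/-- Left-continuity of a t-norm (in each variable; by commutativity one suffices). -/
def LeftCtsTnorm (T : ℝ → ℝ → ℝ) : Prop :=
  ∀ y x : ℝ, Tendsto (fun s => T s y) (nhdsWithin x (Set.Iio x)) (nhds (T x y))

/-- The triangle function ⋆_T : (F ⋆_T L)(t) = sup_{s+u=t} T(F(s), L(u)). -/
noncomputable def starT (T : ℝ → ℝ → ℝ) (f g : ℝ → ℝ) : ℝ → ℝ :=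
  fun t => ⨆ s : ℝ, T (f s) (g (t - s))

/-- Invertible elements of the monoid (Δ⁺, ⋆). -/
def UnitDP (star : (ℝ → ℝ) → (ℝ → ℝ) → (ℝ → ℝ)) (U : ℝ → ℝ) : Prop :=
  MemDP U ∧ ∃ V, MemDP V ∧ star U V = H0 ∧ star V U = H0

/-!
If `f ⊙ g = δₑ`, the identity `(f ⊙ g)(e) = H₀` yields points `bₙ` with `f(bₙ) ⋆ g(bₙ⁻¹) → H₀`.
Each term of `f ⊙ g` is dominated by `δₑ`, i.e. `f(x) ⋆ g(y⁻¹) ≤ D(x, y)`, which makes `(bₙ)` a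
Cauchy sequence. Along a Cauchy sequence every probabilistic 1-Lipschitz map converges weakly
(Helly selection, together with the Lipschitz bound that forces any two subsequential limits to
agree). Hence `δ_{bₙ} → l ∈ Π(G)`, `f(bₙ) → U`, `g(bₙ⁻¹) → V` with `U ⋆ V = H₀`, and `f = ⟨l, U⟩`.

Conversely, an element `l ∈ Π(G)` with defining sequence `(aₙ)` satisfies `l(x) ⋆ l(y) ≤ D(x, y)`
and `l(aₙ) → H₀`, which give `l ⊙ l⁻¹ = δₑ`; the factors `U ⋆ V = H₀` cancel in a sup-convolution.
When `G` is complete, `aₙ → z` and `l = δ_z`.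
-/

lemma H0_of_pos {t : ℝ} (ht : 0 < t) : H0 t = 1 := if_pos ht

lemma H0_of_nonpos {t : ℝ} (ht : t ≤ 0) : H0 t = 0 := if_neg (not_lt.2 ht)

lemma MemDP.monotone {F : ℝ → ℝ} (hF : MemDP F) : Monotone F := hF.1

lemma MemDP.nonneg {F : ℝ → ℝ} (hF : MemDP F) (t : ℝ) : 0 ≤ F t := hF.2.1 t

lemma MemDP.le_one {F : ℝ → ℝ} (hF : MemDP F) (t : ℝ) : F t ≤ 1 := hF.2.2.1 t

lemma MemDP.tendsto_nhdsLT {F : ℝ → ℝ} (hF : MemDP F) (t : ℝ) : Tendsto F (𝓝[<] t) (𝓝 (F t)) :=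
  hF.2.2.2.1 t

lemma MemDP.eq_zero_of_nonpos {F : ℝ → ℝ} (hF : MemDP F) {t : ℝ} (ht : t ≤ 0) : F t = 0 :=
  hF.2.2.2.2 t ht

lemma memDP_H0 : MemDP H0 := by
  refine ⟨fun a b hab => ?_, fun t => ?_, fun t => ?_, fun t => ?_, fun t ht => H0_of_nonpos ht⟩
  · unfold H0; split_ifs <;> linarith
  · unfold H0; split_ifs <;> norm_num
  · unfold H0; split_ifs <;> norm_num
  · rcases le_or_gt t 0 with ht | ht
    · refine tendsto_const_nhds.congr' ?_
      filter_upwards [self_mem_nhdsWithin] with s hs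
      rw [H0_of_nonpos ht, H0_of_nonpos ((le_of_lt hs).trans ht)]
    · refine tendsto_const_nhds.congr' ?_
      filter_upwards [Ioo_mem_nhdsLT ht] with s hs
      rw [H0_of_pos ht, H0_of_pos hs.1]

lemma MemDP.le_H0 {F : ℝ → ℝ} (hF : MemDP F) : dpLE F H0 := fun t => by
  rcases le_or_gt t 0 with ht | ht
  · rw [hF.eq_zero_of_nonpos ht, H0_of_nonpos ht]
  · rw [H0_of_pos ht]; exact hF.le_one t

lemma continuousAt_H0_of_pos {t : ℝ} (ht : 0 < t) : ContinuousAt H0 t :=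
  continuousAt_const.congr ((lt_mem_nhds ht).mono fun _ hs => (H0_of_pos hs).symm)

lemma not_continuousAt_H0_zero : ¬ ContinuousAt H0 0 := fun hc => by
  have h1 : Tendsto H0 (𝓝[>] 0) (𝓝 1) :=
    tendsto_const_nhds.congr' (eventually_nhdsWithin_of_forall fun _ hs => (H0_of_pos hs).symm)
  have h0 : Tendsto H0 (𝓝[>] 0) (𝓝 (H0 0)) := hc.tendsto.mono_left nhdsWithin_le_nhds
  rw [H0_of_nonpos le_rfl] at h0
  exact one_ne_zero (tendsto_nhds_unique h1 h0)

lemma dpLE_antisymm {F K : ℝ → ℝ} (hFK : dpLE F K) (hKF : dpLE K F) : F = K :=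
  funext fun t => le_antisymm (hFK t) (hKF t)

/-- The complement of a countable set is dense, so left-continuity of `F` carries the bound to
every point. -/
lemma MemDP.dpLE_of_forall_notMem {F K : ℝ → ℝ} (hF : MemDP F) (hK : Monotone K) {S : Set ℝ}
    (hS : S.Countable) (h : ∀ t ∉ S, F t ≤ K t) : dpLE F K := by
  intro t
  refine le_of_forall_pos_le_add fun ε hε => ?_
  obtain ⟨l, hl, hsub⟩ := mem_nhdsLT_iff_exists_Ioo_subset.1
    (hF.tendsto_nhdsLT t (Ioi_mem_nhds (sub_lt_self (F t) hε)))
  obtain ⟨s, hsS, hls, hst⟩ := (hS.dense_compl ℝ).exists_between hl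
  have hFs : F t - ε < F s := hsub ⟨hls, hst⟩
  linarith [h s hsS, hK hst.le]

lemma tendsto_nhds_one_iff_of_le_one {α : Type*} {l : Filter α} {u : α → ℝ} (hu : ∀ x, u x ≤ 1) :
    Tendsto u l (𝓝 1) ↔ ∀ ε > 0, ∀ᶠ x in l, 1 - ε ≤ u x := by
  rw [tendsto_order]
  refine ⟨fun h ε hε => (h.1 _ (sub_lt_self 1 hε)).mono fun _ hx => hx.le, fun h => ⟨fun c hc => ?_,
    fun c hc => Eventually.of_forall fun x => (hu x).trans_lt hc⟩⟩
  exact (h ((1 - c) / 2) (by linarith)).mono fun _ hx => by linarith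

lemma WConv.const (F : ℝ → ℝ) : WConv (fun _ => F) F := fun _ _ => tendsto_const_nhds

lemma WConv.comp_tendsto {Fn : ℕ → ℝ → ℝ} {F : ℝ → ℝ} (hF : WConv Fn F) {n : ℕ → ℕ}
    (hn : Tendsto n atTop atTop) : WConv (fun k => Fn (n k)) F :=
  fun t ht => (hF t ht).comp hn

lemma WConv.dpLE {Pn Qn : ℕ → ℝ → ℝ} {P Q : ℝ → ℝ} (hPn : WConv Pn P) (hP : MemDP P)
    (hQ : Monotone Q) (hQn : WConv Qn Q) (hle : ∀ n, dpLE (Pn n) (Qn n)) : dpLE P Q := by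
  refine hP.dpLE_of_forall_notMem hQ
    (hP.monotone.countable_not_continuousAt.union hQ.countable_not_continuousAt) fun t ht => ?_
  simp only [mem_union, mem_ofPred_eq, not_or, not_not] at ht
  exact le_of_tendsto_of_tendsto' (hPn t ht.1) (hQn t ht.2) fun n => hle n t

lemma WConv.unique {Fn : ℕ → ℝ → ℝ} {P Q : ℝ → ℝ} (hP : MemDP P) (hQ : MemDP Q)
    (hFP : WConv Fn P) (hFQ : WConv Fn Q) : P = Q :=
  dpLE_antisymm (hFP.dpLE hP hQ.monotone hFQ fun _ _ => le_rfl)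
    (hFQ.dpLE hQ hP.monotone hFP fun _ _ => le_rfl)

lemma wconv_H0_iff {F : ℕ → ℝ → ℝ} (hF : ∀ n, MemDP (F n)) :
    WConv F H0 ↔ ∀ t > 0, Tendsto (fun n => F n t) atTop (𝓝 1) := by
  refine ⟨fun h t ht => H0_of_pos ht ▸ h t (continuousAt_H0_of_pos ht), fun h t ht => ?_⟩
  rcases lt_trichotomy t 0 with htn | rfl | htp
  · simp only [(hF _).eq_zero_of_nonpos htn.le, H0_of_nonpos htn.le]
    exact tendsto_const_nhds
  · exact absurd ht not_continuousAt_H0_zero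
  · rw [H0_of_pos htp]
    exact h t htp

lemma exists_seq_wconv_H0_of_iSup_eq {ι : Type*} [Nonempty ι] {F : ι → ℝ → ℝ}
    (hF : ∀ i, MemDP (F i)) (h : ∀ t, ⨆ i, F i t = H0 t) :
    ∃ c : ℕ → ι, WConv (fun n => F (c n)) H0 := by
  have hex : ∀ n : ℕ, ∃ i, 1 - 1 / ((n : ℝ) + 1) < F i (1 / (n + 1)) := fun n => by
    refine exists_lt_of_lt_ciSup (f := fun i => F i (1 / ((n : ℝ) + 1))) ?_
    rw [h, H0_of_pos Nat.one_div_pos_of_nat]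
    exact sub_lt_self 1 Nat.one_div_pos_of_nat
  choose c hc using hex
  refine ⟨c, (wconv_H0_iff fun n => hF _).2 fun t ht => ?_⟩
  have hsmall : ∀ᶠ n : ℕ in atTop, 1 / ((n : ℝ) + 1) ≤ t :=
    (tendsto_one_div_add_atTop_nhds_zero_nat.eventually (gt_mem_nhds ht)).mono fun _ => le_of_lt
  have hlower : Tendsto (fun n : ℕ => 1 - 1 / ((n : ℝ) + 1)) atTop (𝓝 1) := by
    simpa using tendsto_const_nhds.sub (tendsto_one_div_add_atTop_nhds_zero_nat (𝕜 := ℝ))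
  exact tendsto_of_tendsto_of_tendsto_of_le_of_le' hlower tendsto_const_nhds
    (hsmall.mono fun n hn => (hc n).le.trans ((hF _).monotone hn))
    (Eventually.of_forall fun n => (hF _).le_one t)

section Helly

noncomputable def ratSup (φ : ℚ → ℝ) (t : ℝ) : ℝ := sSup (φ '' {q : ℚ | (q : ℝ) < t})

variable {φ : ℚ → ℝ}

lemma le_ratSup (h1 : ∀ q, φ q ≤ 1) {q : ℚ} {t : ℝ} (hq : (q : ℝ) < t) : φ q ≤ ratSup φ t :=
  le_csSup
    (show BddAbove (φ '' {q : ℚ | (q : ℝ) < t}) from ⟨1, by rintro _ ⟨q, -, rfl⟩; exact h1 q⟩)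
    ⟨q, hq, rfl⟩

lemma ratSup_le {t a : ℝ} (h : ∀ q : ℚ, (q : ℝ) < t → φ q ≤ a) (ha : 0 ≤ a) : ratSup φ t ≤ a :=
  Real.sSup_le (by rintro _ ⟨q, hq, rfl⟩; exact h q hq) ha

lemma exists_lt_of_lt_ratSup {t c : ℝ} (h : c < ratSup φ t) :
    ∃ q : ℚ, (q : ℝ) < t ∧ c < φ q := by
  obtain ⟨q, hq⟩ := exists_rat_lt t
  obtain ⟨_, ⟨q', hq', rfl⟩, hc⟩ := exists_lt_of_lt_csSup
    (show (φ '' {q : ℚ | (q : ℝ) < t}).Nonempty from ⟨φ q, q, hq, rfl⟩) h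
  exact ⟨q', hq', hc⟩

lemma memDP_ratSup (h0 : ∀ q, 0 ≤ φ q) (h1 : ∀ q, φ q ≤ 1)
    (hneg : ∀ q : ℚ, (q : ℝ) ≤ 0 → φ q = 0) : MemDP (ratSup φ) := by
  have hnn : ∀ t, 0 ≤ ratSup φ t := fun t =>
    let ⟨q, hq⟩ := exists_rat_lt t
    (h0 q).trans (le_ratSup h1 hq)
  have hmon : Monotone (ratSup φ) := fun s t hst =>
    ratSup_le (fun q hq => le_ratSup h1 (hq.trans_le hst)) (hnn t)
  refine ⟨hmon, hnn, fun t => ratSup_le (fun q _ => h1 q) zero_le_one, fun t => ?_,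
    fun t ht => le_antisymm (ratSup_le (fun q hq => (hneg q (hq.le.trans ht)).le) le_rfl) (hnn t)⟩
  refine tendsto_order.2 ⟨fun c hc => ?_, fun c hc => ?_⟩
  · obtain ⟨q, hqt, hcq⟩ := exists_lt_of_lt_ratSup hc
    filter_upwards [Ioo_mem_nhdsLT hqt] with s hs
    exact hcq.trans_le (le_ratSup h1 hs.1)
  · exact eventually_nhdsWithin_of_forall fun s hs => (hmon (le_of_lt hs)).trans_lt hc

/-- Helly's selection theorem in `Δ⁺`. -/
theorem exists_subseq_wconv {A : ℕ → ℝ → ℝ} (hA : ∀ n, MemDP (A n)) :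
    ∃ ψ : ℕ → ℕ, StrictMono ψ ∧ ∃ B, MemDP B ∧ WConv (fun k => A (ψ k)) B := by
  -- a subsequence converging at every rational, by compactness of `[0, 1]^ℚ`
  obtain ⟨x, ψ, hψ, hx⟩ := CompactSpace.tendsto_subseq
    fun n (q : ℚ) => (⟨A n q, (hA n).nonneg q, (hA n).le_one q⟩ : Icc (0 : ℝ) 1)
  set φ : ℚ → ℝ := fun q => x q
  have hφ : ∀ q : ℚ, Tendsto (fun k => A (ψ k) q) atTop (𝓝 (φ q)) := fun q =>
    (continuous_subtype_val.tendsto _).comp (tendsto_pi_nhds.1 hx q)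
  have h1 : ∀ q, φ q ≤ 1 := fun q => (x q).2.2
  have hneg : ∀ q : ℚ, (q : ℝ) ≤ 0 → φ q = 0 := fun q hq =>
    tendsto_nhds_unique (hφ q)
      (by simpa only [(hA _).eq_zero_of_nonpos hq] using tendsto_const_nhds)
  refine ⟨ψ, hψ, ratSup φ, memDP_ratSup (fun q => (x q).2.1) h1 hneg,
    fun t ht => tendsto_order.2 ⟨fun c hc => ?_, fun c hc => ?_⟩⟩
  · obtain ⟨q, hqt, hcq⟩ := exists_lt_of_lt_ratSup hc
    filter_upwards [(hφ q).eventually (lt_mem_nhds hcq)] with k hk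
    exact hk.trans_le ((hA _).monotone hqt.le)
  · obtain ⟨t', htt', ht'c⟩ := (ht.eventually (gt_mem_nhds hc)).exists_gt
    obtain ⟨q, htq, hqt'⟩ := exists_rat_btwn htt'
    filter_upwards [(hφ q).eventually (gt_mem_nhds ((le_ratSup h1 hqt').trans_lt ht'c))] with k hk
    exact ((hA _).monotone htq.le).trans_lt hk

end Helly

section TriangleFunction

variable {star : (ℝ → ℝ) → (ℝ → ℝ) → (ℝ → ℝ)}

lemma IsTriangle.H0_star (hT : IsTriangle star) {F : ℝ → ℝ} (hF : MemDP F) : star H0 F = F := by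
  rw [hT.comm H0 F memDP_H0 hF, hT.ident F hF]

lemma IsTriangle.mono_right (hT : IsTriangle star) {F K₁ K₂ : ℝ → ℝ} (hF : MemDP F)
    (hK₁ : MemDP K₁) (hK₂ : MemDP K₂) (hK : dpLE K₁ K₂) : dpLE (star F K₁) (star F K₂) := by
  rw [hT.comm F K₁ hF hK₁, hT.comm F K₂ hF hK₂]
  exact hT.mono K₁ K₂ F hK₁ hK₂ hF hK

lemma IsTriangle.star_le_left (hT : IsTriangle star) {F K : ℝ → ℝ} (hF : MemDP F) (hK : MemDP K) :
    dpLE (star F K) F := by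
  simpa only [hT.ident F hF] using hT.mono_right hF hK memDP_H0 hK.le_H0

lemma IsTriangle.star_star_star_comm (hT : IsTriangle star) {A B C E : ℝ → ℝ} (hA : MemDP A)
    (hB : MemDP B) (hC : MemDP C) (hE : MemDP E) :
    star (star A B) (star C E) = star (star A C) (star B E) := by
  rw [← hT.assoc A B _ hA hB (hT.mem C E hC hE), hT.assoc B C E hB hC hE, hT.comm B C hB hC,
    ← hT.assoc C B E hC hB hE, hT.assoc A C _ hA hC (hT.mem B E hB hE)]

lemma unitDP_H0 (hT : IsTriangle star) : UnitDP star H0 :=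
  ⟨memDP_H0, H0, memDP_H0, hT.ident H0 memDP_H0, hT.ident H0 memDP_H0⟩

lemma WConv.star_H0_right (hT : IsTriangle star) (hc : StarCont star) {A C : ℕ → ℝ → ℝ}
    {P : ℝ → ℝ} (hA : ∀ n, MemDP (A n)) (hC : ∀ n, MemDP (C n)) (hP : MemDP P)
    (hAP : WConv A P) (hCH : WConv C H0) : WConv (fun n => star (A n) (C n)) P := by
  simpa only [hT.ident P hP] using hc A C P H0 hA hC hP memDP_H0 hAP hCH

lemma WConv.star_H0_left (hT : IsTriangle star) (hc : StarCont star) {A C : ℕ → ℝ → ℝ}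
    {P : ℝ → ℝ} (hA : ∀ n, MemDP (A n)) (hC : ∀ n, MemDP (C n)) (hP : MemDP P)
    (hAP : WConv A P) (hCH : WConv C H0) : WConv (fun n => star (C n) (A n)) P := by
  simpa only [hT.H0_star hP] using hc C A H0 P hC hA memDP_H0 hP hCH hAP

lemma tendsto_star_prod_of_wconv_H0 (hT : IsTriangle star) (hc : StarCont star)
    {F L : ℕ → ℝ → ℝ} (hF : ∀ n, MemDP (F n)) (hL : ∀ n, MemDP (L n)) (hFH : WConv F H0)
    (hLH : WConv L H0) {t : ℝ} (ht : 0 < t) :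
    Tendsto (fun p : ℕ × ℕ => star (F p.1) (L p.2) t) atTop (𝓝 1) := by
  refine tendsto_iff_seq_tendsto.2 fun x hx => ?_
  rw [← prod_atTop_atTop_eq, tendsto_prod_iff'] at hx
  have hlim := (hFH.comp_tendsto hx.1).star_H0_right hT hc (fun _ => hF _) (fun _ => hL _)
    memDP_H0 (hLH.comp_tendsto hx.2)
  exact (wconv_H0_iff fun _ => hT.mem _ _ (hF _) (hL _)).1 hlim t ht

end TriangleFunction

section ProbabilisticMetric

variable {G : Type} {D : G → G → ℝ → ℝ} {star : (ℝ → ℝ) → (ℝ → ℝ) → (ℝ → ℝ)}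

lemma pCauchy_iff (hD : ∀ p q, MemDP (D p q)) {a : ℕ → G} :
    PCauchy D a ↔ ∀ t > 0, Tendsto (fun p : ℕ × ℕ => D (a p.1) (a p.2) t) atTop (𝓝 1) := by
  simp only [PCauchy, tendsto_nhds_one_iff_of_le_one fun _ => (hD _ _).le_one _,
    eventually_atTop_prod_self']

lemma PCauchy.wconv_H0 (hD : ∀ p q, MemDP (D p q)) {a : ℕ → G} (ha : PCauchy D a)
    {n m : ℕ → ℕ} (hn : Tendsto n atTop atTop) (hm : Tendsto m atTop atTop) :
    WConv (fun k => D (a (n k)) (a (m k))) H0 :=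
  (wconv_H0_iff fun _ => hD _ _).2 fun t ht => ((pCauchy_iff hD).1 ha t ht).comp <| by
    rw [← prod_atTop_atTop_eq]
    exact hn.prodMk hm

lemma lip1_dlt (h : IsPMS D star) (a : G) : Lip1 D star (dlt D a) :=
  ⟨fun y => h.mem y a, fun x y => h.triangle_ineq x y a⟩

lemma inPi_dlt (h : IsPMS D star) (z : G) : InPi D star (dlt D z) := by
  refine ⟨lip1_dlt h z, fun _ => z, fun t ht ε hε => ⟨0, fun _ _ _ _ => ?_⟩, fun x => ?_⟩
  · rw [(h.eq_iff z z).2 rfl, H0_of_pos ht]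
    linarith
  · simpa only [dlt, h.symm z x] using WConv.const (D x z)

lemma Lip1.star_const (h : IsPMS D star) {l : G → ℝ → ℝ} (hl : Lip1 D star l) {V : ℝ → ℝ}
    (hV : MemDP V) : Lip1 D star (fun x => star (l x) V) := by
  refine ⟨fun x => h.tri.mem _ _ (hl.1 x) hV, fun x y => ?_⟩
  rw [h.tri.assoc _ _ _ (h.mem x y) (hl.1 y) hV]
  exact h.tri.mono _ _ _ (h.tri.mem _ _ (h.mem x y) (hl.1 y)) (hl.1 x) hV (hl.2 x y)

lemma Lip1.dpLE_of_wconv (h : IsPMS D star) (hc : StarCont star) {f : G → ℝ → ℝ}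
    (hf : Lip1 D star f) {b : ℕ → G} (hb : PCauchy D b) {n m : ℕ → ℕ}
    (hn : Tendsto n atTop atTop) (hm : Tendsto m atTop atTop) {P Q : ℝ → ℝ} (hP : MemDP P)
    (hQ : MemDP Q) (hnP : WConv (fun k => f (b (n k))) P) (hmQ : WConv (fun k => f (b (m k))) Q) :
    dpLE P Q :=
  (hnP.star_H0_left h.tri hc (fun _ => hf.1 _) (fun _ => h.mem _ _) hP
    (hb.wconv_H0 h.mem hm hn)).dpLE hP hQ.monotone hmQ fun _ => hf.2 _ _

lemma Lip1.exists_wconv_of_pCauchy (h : IsPMS D star) (hc : StarCont star) {f : G → ℝ → ℝ}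
    (hf : Lip1 D star f) {b : ℕ → G} (hb : PCauchy D b) :
    ∃ L, MemDP L ∧ WConv (fun n => f (b n)) L := by
  obtain ⟨ψ, hψ, B, hB, hψB⟩ := exists_subseq_wconv fun n => hf.1 (b n)
  refine ⟨B, hB, fun t ht => tendsto_of_subseq_tendsto fun ns hns => ?_⟩
  obtain ⟨ms, hms, B', hB', hmsB'⟩ := exists_subseq_wconv fun k => hf.1 (b (ns k))
  have hnm : Tendsto (fun k => ns (ms k)) atTop atTop := hns.comp hms.tendsto_atTop
  have hBB' : B' = B := dpLE_antisymm
    (hf.dpLE_of_wconv h hc hb hnm hψ.tendsto_atTop hB' hB hmsB' hψB)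
    (hf.dpLE_of_wconv h hc hb hψ.tendsto_atTop hnm hB hB' hψB hmsB')
  subst hBB'
  exact ⟨ms, hmsB' t ht⟩

lemma IsPMS.lip1_of_wconv (h : IsPMS D star) (hc : StarCont star) {b : ℕ → G}
    {l : G → ℝ → ℝ} (hl : ∀ x, MemDP (l x)) (hbl : ∀ x, WConv (fun n => D (b n) x) (l x)) :
    Lip1 D star l := by
  refine ⟨hl, fun x y => ?_⟩
  refine (hc _ _ _ _ (fun _ => h.mem x y) (fun _ => h.mem _ _) (h.mem x y) (hl y) (WConv.const _)
    (hbl y)).dpLE (h.tri.mem _ _ (h.mem x y) (hl y)) (hl x).monotone (hbl x) fun n => ?_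
  rw [h.tri.comm _ _ (h.mem x y) (h.mem _ _), h.symm x y]
  exact h.triangle_ineq (b n) y x

lemma IsPMS.star_le_of_wconv (h : IsPMS D star) (hc : StarCont star) {a : ℕ → G}
    {l : G → ℝ → ℝ} (hl : ∀ x, MemDP (l x)) (hal : ∀ x, WConv (fun n => D (a n) x) (l x))
    (p q : G) : dpLE (star (l p) (l q)) (D p q) := by
  refine (hc _ _ _ _ (fun _ => h.mem _ _) (fun _ => h.mem _ _) (hl p) (hl q) (hal p)
    (hal q)).dpLE (h.tri.mem _ _ (hl p) (hl q)) (h.mem p q).monotone (WConv.const _) fun n => ?_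
  rw [h.symm (a n) p]
  exact h.triangle_ineq p (a n) q

lemma IsPMS.wconv_H0_of_pCauchy (h : IsPMS D star) {a : ℕ → G} (ha : PCauchy D a)
    {l : G → ℝ → ℝ} (hl : ∀ x, MemDP (l x)) (hal : ∀ x, WConv (fun n => D (a n) x) (l x)) :
    WConv (fun n => l (a n)) H0 := by
  refine (wconv_H0_iff fun _ => hl _).2 fun t ht =>
    (tendsto_nhds_one_iff_of_le_one fun _ => (hl _).le_one t).2 fun ε hε => ?_
  obtain ⟨N, hN⟩ := ha (t / 2) (half_pos ht) ε hε
  refine eventually_atTop.2 ⟨N, fun n hn => ?_⟩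
  obtain ⟨s, hs, hts, hst⟩ :=
    ((hl (a n)).monotone.countable_not_continuousAt.dense_compl ℝ).exists_between (half_lt_self ht)
  have hlim : 1 - ε ≤ l (a n) s := ge_of_tendsto (hal (a n) s (not_not.1 hs))
    (eventually_atTop.2 ⟨N, fun m hm => (hN m hm n hn).trans ((h.mem _ _).monotone hts.le)⟩)
  exact hlim.trans ((hl _).monotone hst.le)

lemma eq_dlt_of_wconv (h : IsPMS D star) (hc : StarCont star) {f : G → ℝ → ℝ}
    (hf : ∀ x, MemDP (f x)) {a : ℕ → G} (haf : ∀ x, WConv (fun n => D (a n) x) (f x)) {z : G}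
    (haz : WConv (fun n => D (a n) z) H0) : f = dlt D z := by
  funext x
  refine dpLE_antisymm (((haf x).star_H0_right h.tri hc (fun _ => h.mem _ _) (fun _ => h.mem _ _)
    (hf x) haz).dpLE (hf x) (h.mem x z).monotone (WConv.const _) fun n => ?_)
    (((WConv.const (D x z)).star_H0_right h.tri hc (fun _ => h.mem _ _) (fun _ => h.mem _ _)
    (h.mem x z) haz).dpLE (h.mem x z) (hf x).monotone (haf x) fun n => ?_)
  · rw [h.symm (a n) x]
    exact h.triangle_ineq x (a n) z
  · rw [h.symm (a n) z, h.symm (a n) x]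
    exact h.triangle_ineq x z (a n)

theorem inPi_iff_exists_eq_dlt (h : IsPMS D star) (hc : StarCont star)
    (hcomp : ∀ a : ℕ → G, PCauchy D a → ∃ z : G, WConv (fun n => D (a n) z) H0)
    {f : G → ℝ → ℝ} : InPi D star f ↔ ∃ z, f = dlt D z :=
  ⟨fun ⟨hf, a, ha, haf⟩ => (hcomp a ha).imp fun _ => eq_dlt_of_wconv h hc hf.1 haf,
    by rintro ⟨z, rfl⟩; exact inPi_dlt h z⟩

end ProbabilisticMetric

section InvariantGroup

variable {G : Type} [Group G] {D : G → G → ℝ → ℝ} {star : (ℝ → ℝ) → (ℝ → ℝ) → (ℝ → ℝ)}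

/-- Units of the monoid `(Lip¹_⋆(G, Δ⁺), ⊙)`, whose identity is `δₑ = dlt D 1`. -/
def IsLip1Unit (D : G → G → ℝ → ℝ) (star : (ℝ → ℝ) → (ℝ → ℝ) → (ℝ → ℝ)) (f : G → ℝ → ℝ) :
    Prop :=
  ∃ g, Lip1 D star g ∧ sconv star f g = dlt D 1 ∧ sconv star g f = dlt D 1

lemma IsPIMG.D_mul_inv_one (h : IsPIMG D star) (x y : G) : D (x * y⁻¹) 1 = D x y :=
  (by simpa using h.invR (x * y⁻¹) 1 y : D x y = _).symm

lemma IsPIMG.D_inv_inv (h : IsPIMG D star) (x y : G) : D x⁻¹ y⁻¹ = D x y := by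
  rw [← h.invL x⁻¹ y⁻¹ x, mul_inv_cancel, h.symm, h.D_mul_inv_one]

lemma PCauchy.inv (h : IsPIMG D star) {b : ℕ → G} (hb : PCauchy D b) :
    PCauchy D (fun n => (b n)⁻¹) :=
  fun t ht ε hε => by simpa only [h.D_inv_inv] using hb t ht ε hε

lemma Lip1.comp_inv (h : IsPIMG D star) {l : G → ℝ → ℝ} (hl : Lip1 D star l) :
    Lip1 D star (fun x => l x⁻¹) :=
  ⟨fun _ => hl.1 _, fun x y => by simpa only [h.D_inv_inv] using hl.2 x⁻¹ y⁻¹⟩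

lemma le_sconv (hT : IsTriangle star) {f g : G → ℝ → ℝ} (hf : ∀ x, MemDP (f x))
    (hg : ∀ x, MemDP (g x)) (x y : G) : dpLE (star (f (x * y⁻¹)) (g y)) (sconv star f g x) :=
  fun t => le_ciSup (f := fun z : G => star (f (x * z⁻¹)) (g z) t)
    ⟨1, by rintro _ ⟨z, rfl⟩; exact (hT.mem _ _ (hf _) (hg _)).le_one t⟩ y

lemma sconv_le {f g : G → ℝ → ℝ} {x : G} {Q : ℝ → ℝ} (hQ : ∀ t, 0 ≤ Q t)
    (h : ∀ y, dpLE (star (f (x * y⁻¹)) (g y)) Q) : dpLE (sconv star f g x) Q :=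
  fun t => Real.iSup_le (fun y => h y t) (hQ t)

lemma monotone_sconv (hT : IsTriangle star) {f g : G → ℝ → ℝ} (hf : ∀ x, MemDP (f x))
    (hg : ∀ x, MemDP (g x)) (x : G) : Monotone (sconv star f g x) := fun _ t hst =>
  Real.iSup_le (fun y => ((hT.mem _ _ (hf _) (hg _)).monotone hst).trans (le_sconv hT hf hg x y t))
    (((hT.mem _ _ (hf _) (hg _)).nonneg t).trans (le_sconv hT hf hg x 1 t))

lemma IsTriangle.sconv_star_star (hT : IsTriangle star) {f g : G → ℝ → ℝ}
    (hf : ∀ x, MemDP (f x)) (hg : ∀ x, MemDP (g x)) {U V : ℝ → ℝ} (hU : MemDP U) (hV : MemDP V)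
    (hUV : star U V = H0) :
    sconv star (fun x => star (f x) U) (fun x => star (g x) V) = sconv star f g := by
  funext x t
  simp only [sconv]
  congr 1
  funext y
  rw [hT.star_star_star_comm (hf _) hU (hg _) hV, hUV, hT.ident _ (hT.mem _ _ (hf _) (hg _))]

lemma star_le_D_of_sconv_eq_dlt_one (h : IsPIMG D star) {f g : G → ℝ → ℝ}
    (hf : ∀ x, MemDP (f x)) (hg : ∀ x, MemDP (g x)) (hfg : sconv star f g = dlt D 1) (x y : G) :
    dpLE (star (f x) (g y⁻¹)) (D x y) := by
  simpa only [hfg, dlt, h.D_mul_inv_one, inv_inv, inv_mul_cancel_right] using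
    le_sconv h.tri hf hg (x * y⁻¹) y⁻¹

lemma exists_pCauchy_of_sconv_eq_dlt_one (h : IsPIMG D star) (hc : StarCont star)
    {f g : G → ℝ → ℝ} (hf : ∀ x, MemDP (f x)) (hg : ∀ x, MemDP (g x))
    (hfg : sconv star f g = dlt D 1) :
    ∃ b : ℕ → G, PCauchy D b ∧ WConv (fun n => star (f (b n)) (g (b n)⁻¹)) H0 := by
  have hT := h.tri
  obtain ⟨c, hcH0⟩ := exists_seq_wconv_H0_of_iSup_eq (F := fun y => star (f (1 * y⁻¹)) (g y))
    (fun _ => hT.mem _ _ (hf _) (hg _)) fun t => by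
      rw [← (h.eq_iff 1 1).2 rfl]
      exact congrFun (congrFun hfg 1) t
  set b : ℕ → G := fun n => (c n)⁻¹
  have hdiag : WConv (fun n => star (f (b n)) (g (b n)⁻¹)) H0 := by
    simpa only [b, one_mul, inv_inv] using hcH0
  have hdiagmem : ∀ n, MemDP (star (f (b n)) (g (b n)⁻¹)) := fun _ => hT.mem _ _ (hf _) (hg _)
  refine ⟨b, (pCauchy_iff h.mem).2 fun t ht => ?_, hdiag⟩
  refine tendsto_of_tendsto_of_tendsto_of_le_of_le
    (tendsto_star_prod_of_wconv_H0 hT hc hdiagmem hdiagmem hdiag hdiag ht) tendsto_const_nhds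
    (fun p => ?_) fun p => (h.mem _ _).le_one t
  obtain ⟨n, m⟩ := p
  calc star (star (f (b n)) (g (b n)⁻¹)) (star (f (b m)) (g (b m)⁻¹)) t
      = star (star (f (b n)) (g (b m)⁻¹)) (star (f (b m)) (g (b n)⁻¹)) t := by
        rw [hT.star_star_star_comm (hf _) (hg _) (hf _) (hg _),
          hT.star_star_star_comm (hf _) (hg _) (hf _) (hg _), hT.comm (g (b n)⁻¹) _ (hg _) (hg _)]
    _ ≤ star (f (b n)) (g (b m)⁻¹) t :=
        hT.star_le_left (hT.mem _ _ (hf _) (hg _)) (hT.mem _ _ (hf _) (hg _)) t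
    _ ≤ D (b n) (b m) t := star_le_D_of_sconv_eq_dlt_one h hf hg hfg _ _ t

theorem Lip1.exists_inPi_unitDP_of_sconv_eq_dlt_one (h : IsPIMG D star) (hc : StarCont star)
    {f g : G → ℝ → ℝ} (hf : Lip1 D star f) (hg : Lip1 D star g)
    (hfg : sconv star f g = dlt D 1) :
    ∃ l U, InPi D star l ∧ UnitDP star U ∧ f = fun x => star (l x) U := by
  have hT := h.tri
  obtain ⟨b, hb, hdiag⟩ := exists_pCauchy_of_sconv_eq_dlt_one h hc hf.1 hg.1 hfg
  choose l hl hbl using fun x => (lip1_dlt h.toIsPMS x).exists_wconv_of_pCauchy h.toIsPMS hc hb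
  obtain ⟨U, hU, hbU⟩ := hf.exists_wconv_of_pCauchy h.toIsPMS hc hb
  obtain ⟨V, hV, hbV⟩ := hg.exists_wconv_of_pCauchy h.toIsPMS hc (hb.inv h)
  have hUV : star U V = H0 := WConv.unique (hT.mem _ _ hU hV) memDP_H0
    (hc _ _ _ _ (fun _ => hf.1 _) (fun _ => hg.1 _) hU hV hbU hbV) hdiag
  have hUnit : UnitDP star U := ⟨hU, V, hV, hUV, (hT.comm V U hV hU).trans hUV⟩
  refine ⟨l, U, ⟨h.lip1_of_wconv hc hl hbl, b, hb, hbl⟩, hUnit, funext fun x => ?_⟩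
  have hfx := hf.1 x
  have hlU := hT.mem _ _ (hl x) hU
  have hlim : WConv (fun n => star (D (b n) x) (f (b n))) (star (l x) U) :=
    hc _ _ _ _ (fun _ => h.mem _ _) (fun _ => hf.1 _) (hl x) hU (hbl x) hbU
  have hge : dpLE (star (l x) U) (f x) :=
    hlim.dpLE hlU hfx.monotone (WConv.const _) fun n => h.symm (b n) x ▸ hf.2 x (b n)
  -- `f x ⋆ (f(bₙ) ⋆ g(bₙ⁻¹)) → f x`, and `f x ⋆ g(bₙ⁻¹) ≤ D(x, bₙ)`
  have hle : dpLE (f x) (star (l x) U) := by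
    refine ((WConv.const (f x)).star_H0_right hT hc (fun _ => hfx)
      (fun _ => hT.mem _ _ (hf.1 _) (hg.1 _)) hfx hdiag).dpLE hfx hlU.monotone hlim fun n => ?_
    rw [hT.comm (f (b n)) _ (hf.1 _) (hg.1 _), hT.assoc _ _ _ hfx (hg.1 _) (hf.1 _),
      h.symm (b n) x]
    exact hT.mono _ _ _ (hT.mem _ _ hfx (hg.1 _)) (h.mem _ _) (hf.1 _)
      (star_le_D_of_sconv_eq_dlt_one h hf.1 hg.1 hfg x (b n))
  exact dpLE_antisymm hle hge

lemma sconv_inv_eq_dlt_one (h : IsPIMG D star) (hc : StarCont star) {l : G → ℝ → ℝ}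
    (hl : Lip1 D star l) (hll : ∀ p q, dpLE (star (l p) (l q)) (D p q)) {a : ℕ → G}
    (ha : WConv (fun n => l (a n)) H0) : sconv star l (fun x => l x⁻¹) = dlt D 1 := by
  have hT := h.tri
  have hl' : ∀ x, MemDP (l x⁻¹) := fun _ => hl.1 _
  funext x
  refine dpLE_antisymm (sconv_le (h.mem x 1).nonneg fun y => ?_)
    ((h.mem x 1).dpLE_of_forall_notMem (monotone_sconv hT hl.1 hl' x)
      (h.mem x 1).monotone.countable_not_continuousAt fun s hs => ?_)
  · have hxy : D (x * y⁻¹) y⁻¹ = D x 1 := by simpa using (h.invR (x * y⁻¹) y⁻¹ y).symm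
    simpa only [hxy, dlt] using hll (x * y⁻¹) y⁻¹
  · -- the term at `y = aₙ⁻¹ x` is at least `l(aₙ) ⋆ (D(x, 1) ⋆ l(aₙ)) → D(x, 1)`
    have hlim : WConv (fun n => star (l (a n)) (star (D x 1) (l (a n)))) (D x 1) :=
      ((WConv.const _).star_H0_right hT hc (fun _ => h.mem x 1) (fun _ => hl.1 _) (h.mem x 1)
        ha).star_H0_left hT hc (fun _ => hT.mem _ _ (h.mem x 1) (hl.1 _)) (fun _ => hl.1 _)
        (h.mem x 1) ha
    refine le_of_tendsto (hlim s (not_not.1 hs)) (Eventually.of_forall fun n => ?_)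
    have hxa : D (x⁻¹ * a n) (a n) = D x 1 := by
      have hinv := h.invR x⁻¹ 1 (a n)
      rw [one_mul] at hinv
      rw [hinv]
      simpa using h.D_inv_inv x 1
    calc star (l (a n)) (star (D x 1) (l (a n))) s ≤ star (l (a n)) (l (x⁻¹ * a n)) s :=
          hT.mono_right (hl.1 _) (hT.mem _ _ (h.mem x 1) (hl.1 _)) (hl.1 _)
            (hxa ▸ hl.2 (x⁻¹ * a n) (a n)) s
      _ ≤ sconv star l (fun x => l x⁻¹) x s := by
          simpa using le_sconv hT hl.1 hl' x ((a n)⁻¹ * x) s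

theorem InPi.sconv_inv (h : IsPIMG D star) (hc : StarCont star) {l : G → ℝ → ℝ}
    (hl : InPi D star l) :
    sconv star l (fun x => l x⁻¹) = dlt D 1 ∧ sconv star (fun x => l x⁻¹) l = dlt D 1 := by
  obtain ⟨hlip, a, ha, hal⟩ := hl
  have hll := h.star_le_of_wconv hc hlip.1 hal
  have haH0 := h.wconv_H0_of_pCauchy ha hlip.1 hal
  refine ⟨sconv_inv_eq_dlt_one h hc hlip hll haH0, ?_⟩
  simpa only [inv_inv] using sconv_inv_eq_dlt_one h hc (hlip.comp_inv h)
    (fun p q => by simpa only [h.D_inv_inv] using hll p⁻¹ q⁻¹) (a := fun n => (a n)⁻¹)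
    (by simpa only [inv_inv] using haH0)

theorem isLip1Unit_of_inPi (h : IsPIMG D star) (hc : StarCont star) {l : G → ℝ → ℝ}
    (hl : InPi D star l) {U : ℝ → ℝ} (hU : UnitDP star U) :
    IsLip1Unit D star (fun x => star (l x) U) := by
  obtain ⟨hUm, V, hV, hUV, hVU⟩ := hU
  obtain ⟨hlli, hlil⟩ := hl.sconv_inv h hc
  have hl' : ∀ x, MemDP (l x⁻¹) := fun _ => hl.1.1 _
  refine ⟨fun x => star (l x⁻¹) V, (hl.1.comp_inv h).star_const h.toIsPMS hV, ?_, ?_⟩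
  · rw [h.tri.sconv_star_star hl.1.1 hl' hUm hV hUV, hlli]
  · rw [h.tri.sconv_star_star hl' hl.1.1 hV hUm hVU, hlil]

theorem Lip1.isLip1Unit_iff (h : IsPIMG D star) (hc : StarCont star) {f : G → ℝ → ℝ}
    (hf : Lip1 D star f) :
    IsLip1Unit D star f ↔ ∃ l U, InPi D star l ∧ UnitDP star U ∧ f = fun x => star (l x) U :=
  ⟨fun ⟨_, hg, hfg, _⟩ => hf.exists_inPi_unitDP_of_sconv_eq_dlt_one h hc hg hfg,
    fun ⟨_, _, hl, hU, hfl⟩ => hfl ▸ isLip1Unit_of_inPi h hc hl hU⟩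

theorem Lip1.isLip1Unit_iff_inPi (h : IsPIMG D star) (hc : StarCont star)
    (honly : ∀ U, UnitDP star U → U = H0) {f : G → ℝ → ℝ} (hf : Lip1 D star f) :
    IsLip1Unit D star f ↔ InPi D star f := by
  have hH0 : ∀ l : G → ℝ → ℝ, InPi D star l → (fun x => star (l x) H0) = l :=
    fun l hl => funext fun x => h.tri.ident _ (hl.1.1 x)
  rw [hf.isLip1Unit_iff h hc]
  constructor
  · rintro ⟨l, U, hl, hU, rfl⟩
    rwa [honly U hU, hH0 l hl]
  · exact fun hfPi => ⟨f, H0, hfPi, unitDP_H0 h.tri, (hH0 f hfPi).symm⟩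

end InvariantGroup

theorem stmt16_general {G : Type} [Group G] (D : G → G → ℝ → ℝ)
    (star : (ℝ → ℝ) → (ℝ → ℝ) → (ℝ → ℝ)) (h : IsPIMG D star)
    (hc : StarCont star) :
    (∀ f, Lip1 D star f →
      ((∃ g, Lip1 D star g ∧ sconv star f g = dlt D 1 ∧
          sconv star g f = dlt D 1) ↔
        ∃ l U, InPi D star l ∧ UnitDP star U ∧ f = fun x => star (l x) U)) ∧
    (∀ l li U V, InPi D star l → InPi D star li → MemDP U → MemDP V →
      sconv star l li = dlt D 1 → sconv star li l = dlt D 1 →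
      star U V = H0 → star V U = H0 →
      sconv star (fun x => star (l x) U) (fun x => star (li x) V) = dlt D 1 ∧
      sconv star (fun x => star (li x) V) (fun x => star (l x) U) = dlt D 1) ∧
    ((∀ U, UnitDP star U → U = H0) →
      ∀ f, Lip1 D star f →
        ((∃ g, Lip1 D star g ∧ sconv star f g = dlt D 1 ∧
            sconv star g f = dlt D 1) ↔ InPi D star f)) ∧
    ((∀ U, UnitDP star U → U = H0) →
      (∀ a : ℕ → G, PCauchy D a → ∃ z : G, WConv (fun n => D (a n) z) H0) →
      ∀ f, Lip1 D star f →
        ((∃ g, Lip1 D star g ∧ sconv star f g = dlt D 1 ∧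
            sconv star g f = dlt D 1) ↔ ∃ a : G, f = dlt D a)) := by
  refine ⟨fun _ hf => hf.isLip1Unit_iff h hc, ?_,
    fun honly _ hf => hf.isLip1Unit_iff_inPi h hc honly, fun honly hcomp _ hf =>
      (hf.isLip1Unit_iff_inPi h hc honly).trans (inPi_iff_exists_eq_dlt h.toIsPMS hc hcomp)⟩
  intro l li U V hl hli hU hV hlli hlil hUV hVU
  exact ⟨(h.tri.sconv_star_star hl.1.1 hli.1.1 hU hV hUV).trans hlli,
    (h.tri.sconv_star_star hli.1.1 hl.1.1 hV hU hVU).trans hlil⟩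

/-- the group of units of (Lip¹_⋆(G,Δ⁺), ⊙) is ⟨Π(G), 𝒰(Δ⁺)⟩;
inverses are ⟨f⁻¹,U⁻¹⟩; if 𝒰(Δ⁺) = {H₀} the units are exactly Π(G), and if
moreover G is complete they are exactly {δ_a : a ∈ G}. -/
theorem stmt16 {G : Type} [Group G] (D : G → G → ℝ → ℝ)
    (star : (ℝ → ℝ) → (ℝ → ℝ) → (ℝ → ℝ)) (h : IsPIMG D star)
    (hc : StarCont star) (hsc : SupCont star) :
    (∀ f, Lip1 D star f →
      ((∃ g, Lip1 D star g ∧ sconv star f g = dlt D 1 ∧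
          sconv star g f = dlt D 1) ↔
        ∃ l U, InPi D star l ∧ UnitDP star U ∧ f = fun x => star (l x) U)) ∧
    (∀ l li U V, InPi D star l → InPi D star li → MemDP U → MemDP V →
      sconv star l li = dlt D 1 → sconv star li l = dlt D 1 →
      star U V = H0 → star V U = H0 →
      sconv star (fun x => star (l x) U) (fun x => star (li x) V) = dlt D 1 ∧
      sconv star (fun x => star (li x) V) (fun x => star (l x) U) = dlt D 1) ∧
    ((∀ U, UnitDP star U → U = H0) →
      ∀ f, Lip1 D star f →
        ((∃ g, Lip1 D star g ∧ sconv star f g = dlt D 1 ∧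
            sconv star g f = dlt D 1) ↔ InPi D star f)) ∧
    ((∀ U, UnitDP star U → U = H0) →
      (∀ a : ℕ → G, PCauchy D a → ∃ z : G, WConv (fun n => D (a n) z) H0) →
      ∀ f, Lip1 D star f →
        ((∃ g, Lip1 D star g ∧ sconv star f g = dlt D 1 ∧
            sconv star g f = dlt D 1) ↔ ∃ a : G, f = dlt D a)) :=
  stmt16_general D star h hc
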